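/- Suppose clusterings g, g' : {1,…,n} → {1,…,K} differ on at most D points, and each point i carries a correctness indicator y_i ∈ {0,1}. For a cluster k with s_k = |{i : g(i)=k}| > 0 and s'_k = |{i : g'(i)=k}| > 0, the within-cluster accuracies a_k = (Σ_{g(i)=k} y_i)/s_k and a'_k = (Σ_{g'(i)=k} y_i)/s'_k satisfy |a_k − a'_k| ≤ 2D / min(s_k, s'_k). -/
import Mathlib

lemma cluster_aux (A A' s s' DD : ℝ) (hs : 0 < s) (hs' : 0 < s')
    (hA'0 : 0 ≤ A') (hA's : A' ≤ s')
    (hkey : |A - A'| + |s - s'| ≤ DD) :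
    |A / s - A' / s'| ≤ DD / min s s' := by
  have hmin : 0 < min s s' := lt_min hs hs'
  have hDD : 0 ≤ DD := le_trans (by positivity) hkey
  rw [div_sub_div _ _ hs.ne' hs'.ne', abs_div, abs_of_pos (by positivity : (0:ℝ) < s * s'),
    div_le_div_iff₀ (by positivity) hmin]
  have e : A * s' - A' * s = (A - A') * s' + A' * (s' - s) := by ring
  have h1 : |A * s' - A' * s| ≤ DD * s' := by
    calc |A * s' - A' * s| ≤ |(A - A') * s'| + |A' * (s' - s)| := by
          rw [e]; exact abs_add_le _ _
      _ = |A - A'| * s' + A' * |s - s'| := by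
          rw [abs_mul, abs_mul, abs_of_pos hs', abs_of_nonneg hA'0, abs_sub_comm s' s]
      _ ≤ |A - A'| * s' + s' * |s - s'| := by nlinarith [abs_nonneg (s - s')]
      _ ≤ DD * s' := by nlinarith
  have h2 : min s s' ≤ s := min_le_left _ _
  have h1' : |A * s' - s * A'| ≤ DD * s' := by rw [mul_comm s A']; exact h1
  nlinarith [mul_le_mul_of_nonneg_right h1' hmin.le,
    mul_le_mul_of_nonneg_left h2 (by positivity : (0:ℝ) ≤ DD * s')]

theorem cluster_accuracy_stability {n K D : ℕ}
    (g g' : Fin n → Fin K) (y : Fin n → ℝ)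
    (hy : ∀ i, y i = 0 ∨ y i = 1)
    (hdiff : (Finset.univ.filter (fun i => g i ≠ g' i)).card ≤ D)
    (k : Fin K)
    (hs : 0 < (Finset.univ.filter (fun i => g i = k)).card)
    (hs' : 0 < (Finset.univ.filter (fun i => g' i = k)).card) :
    |(∑ i ∈ Finset.univ.filter (fun i => g i = k), y i) /
        ((Finset.univ.filter (fun i => g i = k)).card : ℝ) -
      (∑ i ∈ Finset.univ.filter (fun i => g' i = k), y i) /
        ((Finset.univ.filter (fun i => g' i = k)).card : ℝ)| ≤
      2 * (D : ℝ) /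
        (min ((Finset.univ.filter (fun i => g i = k)).card : ℝ)
          ((Finset.univ.filter (fun i => g' i = k)).card : ℝ)) := by
  set S := Finset.univ.filter (fun i => g i = k) with hSdef
  set S' := Finset.univ.filter (fun i => g' i = k) with hS'def
  -- the diff pieces are small
  have hsub1 : S \ S' ⊆ Finset.univ.filter (fun i => g i ≠ g' i) := by
    intro i hi
    simp only [hSdef, hS'def, Finset.mem_sdiff, Finset.mem_filter, Finset.mem_univ,
      true_and] at hi ⊢
    intro h; exact hi.2 (h ▸ hi.1)
  have hsub2 : S' \ S ⊆ Finset.univ.filter (fun i => g i ≠ g' i) := by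
    intro i hi
    simp only [hSdef, hS'def, Finset.mem_sdiff, Finset.mem_filter, Finset.mem_univ,
      true_and] at hi ⊢
    intro h; exact hi.2 (h ▸ hi.1)
  have hd1 : (S \ S').card ≤ D := le_trans (Finset.card_le_card hsub1) hdiff
  have hd2 : (S' \ S).card ≤ D := le_trans (Finset.card_le_card hsub2) hdiff
  -- sum splits
  have hsumS : ∑ i ∈ S, y i = ∑ i ∈ S ∩ S', y i + ∑ i ∈ S \ S', y i :=
    (Finset.sum_inter_add_sum_sdiff S S' y).symm
  have hsumS' : ∑ i ∈ S', y i = ∑ i ∈ S ∩ S', y i + ∑ i ∈ S' \ S, y i := by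
    rw [Finset.inter_comm]
    exact (Finset.sum_inter_add_sum_sdiff S' S y).symm
  have hcardS : S.card = (S ∩ S').card + (S \ S').card :=
    (Finset.card_inter_add_card_sdiff S S').symm
  have hcardS' : S'.card = (S ∩ S').card + (S' \ S).card := by
    rw [Finset.inter_comm]
    exact (Finset.card_inter_add_card_sdiff S' S).symm
  -- bounds on partial sums
  have hbound : ∀ T : Finset (Fin n), 0 ≤ ∑ i ∈ T, y i ∧ ∑ i ∈ T, y i ≤ T.card := by
    intro T
    constructor
    · exact Finset.sum_nonneg fun i _ => by rcases hy i with h | h <;> simp [h]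
    · calc ∑ i ∈ T, y i ≤ ∑ i ∈ T, (1 : ℝ) :=
            Finset.sum_le_sum fun i _ => by rcases hy i with h | h <;> simp [h]
        _ = T.card := by simp
  have key : |(∑ i ∈ S, y i) - ∑ i ∈ S', y i| + |(S.card : ℝ) - S'.card| ≤ 2 * D := by
    obtain ⟨hx0, hx1⟩ := hbound (S \ S')
    obtain ⟨hz0, hz1⟩ := hbound (S' \ S)
    have hd1' : ((S \ S').card : ℝ) ≤ D := by exact_mod_cast hd1
    have hd2' : ((S' \ S).card : ℝ) ≤ D := by exact_mod_cast hd2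
    have hc : (S.card : ℝ) = (S ∩ S').card + (S \ S').card := by exact_mod_cast hcardS
    have hc' : (S'.card : ℝ) = (S ∩ S').card + (S' \ S).card := by exact_mod_cast hcardS'
    rcases abs_cases ((∑ i ∈ S, y i) - ∑ i ∈ S', y i) with ⟨e1, _⟩ | ⟨e1, _⟩ <;>
      rcases abs_cases ((S.card : ℝ) - S'.card) with ⟨e2, _⟩ | ⟨e2, _⟩ <;>
      rw [e1, e2] <;> rw [hsumS, hsumS'] <;> linarith
  have hsR : (0 : ℝ) < S.card := by exact_mod_cast hs
  have hs'R : (0 : ℝ) < S'.card := by exact_mod_cast hs'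
  obtain ⟨h0, h1⟩ := hbound S'
  exact cluster_aux _ _ _ _ _ hsR hs'R h0 h1 key
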